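/- For every real number b ≥ 0 and every complex number s with 0 < Re(s) < 1, one has ∫₀^∞ cos(b·u) · (cosh(u) − 1)^{−s/2} du = (cosh(π b) / cos(π s/2)) · 2^{s/2 − 1} · Γ(s/2 + i b) · Γ(s/2 − i b) / Γ(s). -/

import Mathlib

/-!
Substituting `x = e^{-u}` gives `cosh u - 1 = (1 - x)² / (2x)`, so that
`e^{-wu} (cosh u - 1)^{-s/2} du` becomes `2^{s/2} x^{s/2 + w - 1} (1 - x)^{-s} dx`: a Laplace
transform of `(cosh u - 1)^{-s/2}` is a Beta integral. Writing `cos (bu)` as the mean of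
`e^{± ibu}` turns the integral into `2^{s/2 - 1} (B(s/2 + ib, 1 - s) + B(s/2 - ib, 1 - s))`.
With `B(z, 1 - s) = Γ(z) Γ(1 - s) / Γ(1 - (s - z))` and Euler's reflection formula both terms
share the factor `Γ(s/2 + ib) Γ(s/2 - ib) Γ(1 - s) / π`, the two sines add up to
`2 sin(πs/2) cosh(πb)`, and reflection once more turns `Γ(1 - s) sin(πs) / π` into `1 / Γ(s)`.
-/

open MeasureTheory Complex
open scoped Real

section ExpNegSubstitution

open Set

variable {E : Type*} [NormedAddCommGroup E] [NormedSpace ℝ E]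

lemma image_exp_neg_Ioi_zero : (fun u : ℝ => Real.exp (-u)) '' Ioi 0 = Ioo 0 1 := by
  have : (fun u : ℝ => Real.exp (-u)) = Real.exp ∘ Neg.neg := rfl
  rw [this, image_comp, image_neg_Ioi, neg_zero, Real.image_exp_Iio, Real.exp_zero]

lemma hasDerivWithinAt_exp_neg (s : Set ℝ) (u : ℝ) :
    HasDerivWithinAt (fun u => Real.exp (-u)) (-Real.exp (-u)) s u := by
  simpa using (hasDerivAt_neg u).exp.hasDerivWithinAt

lemma injective_exp_neg : Function.Injective fun u : ℝ => Real.exp (-u) :=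
  Real.exp_injective.comp neg_injective

theorem intervalIntegrable_iff_integrableOn_Ioi_exp_neg_smul {g : ℝ → E} :
    IntervalIntegrable g volume 0 1 ↔
      IntegrableOn (fun u => Real.exp (-u) • g (Real.exp (-u))) (Ioi 0) := by
  rw [intervalIntegrable_iff_integrableOn_Ioo_of_le zero_le_one, ← image_exp_neg_Ioi_zero,
    integrableOn_image_iff_integrableOn_abs_deriv_smul measurableSet_Ioi
      (fun u _ => hasDerivWithinAt_exp_neg _ u) injective_exp_neg.injOn]
  simp only [abs_neg, abs_of_pos (Real.exp_pos _)]

theorem intervalIntegral_eq_integral_Ioi_exp_neg_smul (g : ℝ → E) :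
    ∫ x in (0 : ℝ)..1, g x = ∫ u in Ioi 0, Real.exp (-u) • g (Real.exp (-u)) := by
  rw [intervalIntegral.integral_of_le zero_le_one, integral_Ioc_eq_integral_Ioo,
    ← image_exp_neg_Ioi_zero,
    integral_image_eq_integral_abs_deriv_smul measurableSet_Ioi
      (fun u _ => hasDerivWithinAt_exp_neg _ u) injective_exp_neg.injOn]
  simp only [abs_neg, abs_of_pos (Real.exp_pos _)]

end ExpNegSubstitution

namespace Complex

theorem inv_Gamma_one_sub {w : ℂ} (hw : Gamma w ≠ 0) :
    (Gamma (1 - w))⁻¹ = Gamma w * sin (π * w) / π := by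
  have hrefl := Gamma_mul_Gamma_one_sub w
  by_cases hsin : sin (π * w) = 0
  · rw [hsin, div_zero, mul_eq_zero, or_iff_right hw] at hrefl
    simp [hrefl, hsin]
  · rw [eq_div_iff hsin] at hrefl
    rw [inv_eq_of_mul_eq_one_left]
    field_simp
    linear_combination hrefl

theorem betaIntegral_one_sub_eq {z s : ℂ} (hz : 0 < z.re) (hzs : z.re < s.re) (hs : s.re < 1) :
    betaIntegral z (1 - s) = Gamma z * Gamma (s - z) * Gamma (1 - s) * sin (π * (s - z)) / π := by
  have hbeta := Gamma_mul_Gamma_eq_betaIntegral hz (by simpa using hs : 0 < (1 - s).re)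
  rw [show z + (1 - s) = 1 - (s - z) by ring] at hbeta
  have hΓ : Gamma (1 - (s - z)) ≠ 0 :=
    Gamma_ne_zero_of_re_pos (by simp only [sub_re, one_re]; linarith)
  rw [eq_comm, ← eq_inv_mul_iff_mul_eq₀ hΓ,
    inv_Gamma_one_sub (Gamma_ne_zero_of_re_pos (by simpa using hzs))] at hbeta
  rw [hbeta]
  ring

theorem betaIntegral_add_betaIntegral_sub {z s : ℂ} (hz : 0 < z.re) (hzs : z.re < s.re)
    (hs : s.re < 1) :
    betaIntegral z (1 - s) + betaIntegral (s - z) (1 - s) =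
      Gamma z * Gamma (s - z) / Gamma s * (cos (π * (z - s / 2)) / cos (π * s / 2)) := by
  have hΓs : Gamma s ≠ 0 := Gamma_ne_zero_of_re_pos (by linarith)
  have hΓ1s : Gamma (1 - s) ≠ 0 := Gamma_ne_zero_of_re_pos (by simpa using hs)
  have hrefl := inv_Gamma_one_sub hΓs
  have hsin_two : sin (π * s) = 2 * sin (π * s / 2) * cos (π * s / 2) := by
    rw [← sin_two_mul]; ring_nf
  have hsin_add :
      sin (π * z) + sin (π * (s - z)) = 2 * sin (π * s / 2) * cos (π * (z - s / 2)) := by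
    rw [sin_add_sin]; ring_nf
  have hsin : sin (π * s) ≠ 0 := by
    intro h
    rw [h, mul_zero, zero_div, inv_eq_zero] at hrefl
    exact hΓ1s hrefl
  have hcos : cos (π * s / 2) ≠ 0 := by
    intro h
    rw [hsin_two, h, mul_zero] at hsin
    exact hsin rfl
  have hΓ1s_sin : Gamma (1 - s) * sin (π * s) / π = (Gamma s)⁻¹ := by
    rw [← inv_inv (Gamma (1 - s)), hrefl]
    field_simp
  calc betaIntegral z (1 - s) + betaIntegral (s - z) (1 - s)
      = Gamma z * Gamma (s - z) * Gamma (1 - s) / π * (sin (π * z) + sin (π * (s - z))) := by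
        rw [betaIntegral_one_sub_eq hz hzs hs,
          betaIntegral_one_sub_eq (by simpa using hzs) (by simpa using hz) hs, sub_sub_cancel]
        ring
    _ = Gamma z * Gamma (s - z) * (Gamma (1 - s) * sin (π * s) / π) *
          (cos (π * (z - s / 2)) / cos (π * s / 2)) := by
        rw [hsin_add, hsin_two]
        generalize cos (π * s / 2) = c at hcos ⊢
        field_simp
    _ = Gamma z * Gamma (s - z) / Gamma s * (cos (π * (z - s / 2)) / cos (π * s / 2)) := by
        rw [hΓ1s_sin]
        ring

end Complex

lemma ofReal_cpow_eq_exp {r : ℝ} (hr : 0 < r) (w : ℂ) :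
    (r : ℂ) ^ w = cexp (Real.log r * w) := by
  rw [cpow_def_of_ne_zero (ofReal_ne_zero.mpr hr.ne'), ofReal_log hr.le]

lemma cosh_sub_one_eq (u : ℝ) :
    Real.cosh u - 1 = (1 - Real.exp (-u)) ^ 2 * Real.exp u / 2 := by
  rw [Real.cosh_eq, Real.exp_neg]
  field_simp
  ring

lemma exp_neg_mul_mul_cosh_sub_one_cpow (s w : ℂ) {u : ℝ} (hu : 0 < u) :
    cexp (-(w * u)) * ((Real.cosh u - 1 : ℝ) : ℂ) ^ (-(s / 2)) =
      Real.exp (-u) • ((2 : ℂ) ^ (s / 2) * (((Real.exp (-u) : ℝ) : ℂ) ^ (s / 2 + w - 1) *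
        (1 - ((Real.exp (-u) : ℝ) : ℂ)) ^ ((1 - s) - 1))) := by
  have hx1 : 0 < 1 - Real.exp (-u) := by
    rw [sub_pos, Real.exp_lt_one_iff]; linarith
  have hcosh : 0 < Real.cosh u - 1 := by rw [cosh_sub_one_eq]; positivity
  have hlog :
      Real.log (Real.cosh u - 1) = 2 * Real.log (1 - Real.exp (-u)) + u - Real.log 2 := by
    rw [cosh_sub_one_eq, Real.log_div (by positivity) two_ne_zero,
      Real.log_mul (by positivity) (Real.exp_ne_zero u), Real.log_pow, Real.log_exp]
    push_cast; ring
  rw [real_smul, ofReal_cpow_eq_exp hcosh, ofReal_cpow_eq_exp (Real.exp_pos _),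
    show (1 : ℂ) - ((Real.exp (-u) : ℝ) : ℂ) = ((1 - Real.exp (-u) : ℝ) : ℂ) by push_cast; rfl,
    ofReal_cpow_eq_exp hx1, cpow_def_of_ne_zero two_ne_zero, hlog, Real.log_exp, ofReal_exp]
  simp only [← Complex.exp_add]
  congr 1
  rw [← ofReal_ofNat, ← ofReal_log zero_le_two]
  push_cast
  ring

section CoshLaplace

open Set

variable {s w : ℂ}

lemma integrableOn_exp_neg_mul_mul_cosh_sub_one_cpow (hw : 0 < (s / 2 + w).re) (hs : s.re < 1) :
    IntegrableOn (fun u : ℝ => cexp (-(w * u)) * ((Real.cosh u - 1 : ℝ) : ℂ) ^ (-(s / 2)))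
      (Ioi 0) := by
  have hbeta := (betaIntegral_convergent hw (by simpa using hs : 0 < (1 - s).re)).const_mul
    ((2 : ℂ) ^ (s / 2))
  exact (intervalIntegrable_iff_integrableOn_Ioi_exp_neg_smul.mp hbeta).congr_fun
    (fun u hu => (exp_neg_mul_mul_cosh_sub_one_cpow s w hu).symm) measurableSet_Ioi

lemma integral_exp_neg_mul_mul_cosh_sub_one_cpow (s w : ℂ) :
    ∫ u in Ioi (0 : ℝ), cexp (-(w * u)) * ((Real.cosh u - 1 : ℝ) : ℂ) ^ (-(s / 2)) =
      (2 : ℂ) ^ (s / 2) * betaIntegral (s / 2 + w) (1 - s) := by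
  rw [setIntegral_congr_fun measurableSet_Ioi
      (fun u hu => exp_neg_mul_mul_cosh_sub_one_cpow s w hu),
    ← intervalIntegral_eq_integral_Ioi_exp_neg_smul
      fun x => (2 : ℂ) ^ (s / 2) * ((x : ℂ) ^ (s / 2 + w - 1) * (1 - (x : ℂ)) ^ ((1 - s) - 1)),
    intervalIntegral.integral_const_mul, betaIntegral]

end CoshLaplace

theorem cosh_minus_one_integral_eval_general (b : ℝ) (s : ℂ)
    (hs0 : 0 < s.re) (hs1 : s.re < 1) :
    ∫ u in Set.Ioi (0:ℝ),
      (Real.cos (b * u) : ℂ) * ((Real.cosh u - 1 : ℝ) : ℂ) ^ (-(s / 2)) =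
      ((Real.cosh (Real.pi * b) : ℂ) / Complex.cos ((Real.pi : ℂ) * s / 2)) *
        ((2 : ℂ) ^ (s / 2 - 1) * Complex.Gamma (s / 2 + I * b) *
          Complex.Gamma (s / 2 - I * b) / Complex.Gamma s) := by
  have hre : (s / 2 + I * b).re = s.re / 2 := by simp
  have hplus : 0 < (s / 2 + I * b).re := by rw [hre]; linarith
  have hminus : 0 < (s / 2 + -(I * b)).re := by simpa using hplus
  have hcos_split (u : ℝ) :
      (Real.cos (b * u) : ℂ) * ((Real.cosh u - 1 : ℝ) : ℂ) ^ (-(s / 2)) =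
        (cexp (-(I * b * u)) * ((Real.cosh u - 1 : ℝ) : ℂ) ^ (-(s / 2)) +
          cexp (-(-(I * b) * u)) * ((Real.cosh u - 1 : ℝ) : ℂ) ^ (-(s / 2))) / 2 := by
    rw [ofReal_cos, Complex.cos]
    push_cast
    ring_nf
  have hbeta := betaIntegral_add_betaIntegral_sub hplus (by rw [hre]; linarith) hs1
  rw [show s - (s / 2 + I * b) = s / 2 - I * b by ring, add_sub_cancel_left,
    show (π : ℂ) * (I * b) = (π * b : ℝ) * I by push_cast; ring, cos_mul_I, ← ofReal_cosh]
    at hbeta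
  simp_rw [hcos_split]
  rw [integral_div,
    integral_add (integrableOn_exp_neg_mul_mul_cosh_sub_one_cpow hplus hs1)
      (integrableOn_exp_neg_mul_mul_cosh_sub_one_cpow hminus hs1),
    integral_exp_neg_mul_mul_cosh_sub_one_cpow, integral_exp_neg_mul_mul_cosh_sub_one_cpow,
    ← sub_eq_add_neg, ← mul_add, hbeta, cpow_sub _ _ two_ne_zero, cpow_one]
  ring

/-- Closed-form evaluation of `∫₀^∞ cos(bu)(cosh u − 1)^{-s/2} du` for `b ≥ 0`
and `0 < Re s < 1`. -/
theorem cosh_minus_one_integral_eval (b : ℝ) (hb : 0 ≤ b) (s : ℂ)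
    (hs0 : 0 < s.re) (hs1 : s.re < 1) :
    ∫ u in Set.Ioi (0:ℝ),
      (Real.cos (b * u) : ℂ) * ((Real.cosh u - 1 : ℝ) : ℂ) ^ (-(s / 2)) =
      ((Real.cosh (Real.pi * b) : ℂ) / Complex.cos ((Real.pi : ℂ) * s / 2)) *
        ((2 : ℂ) ^ (s / 2 - 1) * Complex.Gamma (s / 2 + I * b) *
          Complex.Gamma (s / 2 - I * b) / Complex.Gamma s) :=
  cosh_minus_one_integral_eval_general b s hs0 hs1
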